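/- arXiv:0801.2608 — 2 statements merged into one kernel-verified Lean document; each statement's English description precedes it below -/
import Mathlib

section
/- With x = 1 − 2p, the Hamming-code distance probabilities satisfy the linear relation (m₀, m₁, m₂, m₃)ᵀ = (1/16) M (1, x³, x⁴, x⁷)ᵀ, where M is the 4×4 matrix with rows (1,7,7,1), (7,7,−7,−7), (7,−7,−7,7), (1,−7,7,−1). -/
open Matrix

/-- With x = 1 − 2p the Hamming distance probabilities satisfy
(m₀,m₁,m₂,m₃)ᵀ = (1/16) M (1, x³, x⁴, x⁷)ᵀ. -/
theorem stmt9 (p x m₀ m₁ m₂ m₃ : ℝ) (hx : x = 1 - 2 * p)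
    (h0 : m₀ = (1 - p) ^ 7 + 7 * p ^ 4 * (1 - p) ^ 3)
    (h1 : m₁ = 7 * p * (1 - p) ^ 6 + 28 * p ^ 3 * (1 - p) ^ 4 + 21 * p ^ 5 * (1 - p) ^ 2)
    (h2 : m₂ = 21 * p ^ 2 * (1 - p) ^ 5 + 28 * p ^ 4 * (1 - p) ^ 3 + 7 * p ^ 6 * (1 - p))
    (h3 : m₃ = 7 * p ^ 3 * (1 - p) ^ 4 + p ^ 7) :
    ![m₀, m₁, m₂, m₃] =
      (1/16 : ℝ) • Matrix.mulVec
        !![(1:ℝ), 7, 7, 1; 7, 7, -7, -7; 7, -7, -7, 7; 1, -7, 7, -1]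
        ![1, x ^ 3, x ^ 4, x ^ 7] := by
  subst hx h0 h1 h2 h3
  funext i
  fin_cases i <;>
    simp [Matrix.mulVec, dotProduct, Fin.sum_univ_succ] <;> ring
end

section
/- For f₂₃(x) = (3795/512)x⁷ − (805/64)x¹¹ + (1771/256)x¹⁵ − (385/512)x²³, the following hold: f₂₃(1) = 1, f₂₃ is odd, f₂₃'(1) = f₂₃''(1) = f₂₃'''(1) = 0, and for x near 1, 1 − f₂₃(x) = O((1−x)⁴). -/
noncomputable def f₂₃ : ℝ → ℝ := fun x =>
  (3795/512) * x ^ 7 - (805/64) * x ^ 11 + (1771/256) * x ^ 15 - (385/512) * x ^ 23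

/-! The polynomial `1 - f₂₃` vanishes at `1` together with its first three derivatives, so in
characteristic zero its root at `1` has multiplicity at least four: `1 - f₂₃ = (X - 1)⁴ q`. Near `1`
the factor `q` is bounded, which gives the `O((1 - x)⁴)` estimate. -/

open Polynomial Asymptotics Topology

namespace Polynomial

theorem X_sub_C_pow_dvd_of_iterate_derivative_isRoot {R : Type*} [CommRing R] [IsDomain R]
    [CharZero R] {p : R[X]} {a : R} {n : ℕ}
    (h : ∀ m < n, (derivative^[m] p).IsRoot a) : (X - C a) ^ n ∣ p := by
  rcases eq_or_ne p 0 with rfl | hp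
  · exact dvd_zero _
  cases n with
  | zero => simp
  | succ n =>
    exact (le_rootMultiplicity_iff hp).mp
      (lt_rootMultiplicity_of_isRoot_iterate_derivative hp fun m hm => h m (Nat.lt_succ_of_le hm))

theorem isBigO_eval_of_X_sub_C_pow_dvd {𝕜 : Type*} [NormedField 𝕜] {p : 𝕜[X]} {a : 𝕜} {n : ℕ}
    (h : (X - C a) ^ n ∣ p) : (fun x => p.eval x) =O[𝓝 a] fun x => (x - a) ^ n := by
  obtain ⟨q, rfl⟩ := h
  simpa using (isBigO_refl (fun x => (x - a) ^ n) (𝓝 a)).mul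
    ((q.continuous.tendsto a).isBigO_one (F := 𝕜))

theorem iterate_deriv_eval {𝕜 : Type*} [NontriviallyNormedField 𝕜] (p : 𝕜[X]) (k : ℕ) :
    deriv^[k] (fun x => p.eval x) = fun x => (derivative^[k] p).eval x := by
  induction k with
  | zero => rfl
  | succ k ih =>
    rw [Function.iterate_succ_apply', ih, Function.iterate_succ_apply']
    ext x
    exact Polynomial.deriv _

end Polynomial

theorem f₂₃_one : f₂₃ 1 = 1 := by norm_num [f₂₃]

theorem f₂₃_neg (x : ℝ) : f₂₃ (-x) = -f₂₃ x := by
  simp only [f₂₃]; ring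

noncomputable def f₂₃Poly : ℝ[X] :=
  C (3795/512) * X ^ 7 - C (805/64) * X ^ 11 + C (1771/256) * X ^ 15 - C (385/512) * X ^ 23

theorem eval_f₂₃Poly (x : ℝ) : f₂₃Poly.eval x = f₂₃ x := by
  simp [f₂₃Poly, f₂₃]

theorem iterate_derivative_f₂₃Poly_eval_one {m : ℕ} (h₁ : 1 ≤ m) (h₃ : m ≤ 3) :
    (derivative^[m] f₂₃Poly).eval 1 = 0 := by
  interval_cases m <;> norm_num [f₂₃Poly]

theorem isRoot_iterate_derivative_one_sub_f₂₃Poly {m : ℕ} (h : m < 4) :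
    (derivative^[m] (1 - f₂₃Poly)).IsRoot 1 := by
  rcases Nat.eq_zero_or_pos m with rfl | hm
  · simp [eval_f₂₃Poly, f₂₃_one]
  · simp [iterate_derivative_one hm, iterate_derivative_f₂₃Poly_eval_one hm (by omega)]

theorem iterate_deriv_f₂₃_one {m : ℕ} (h₁ : 1 ≤ m) (h₃ : m ≤ 3) : deriv^[m] f₂₃ 1 = 0 := by
  have hf : f₂₃ = fun x => f₂₃Poly.eval x := funext fun x => (eval_f₂₃Poly x).symm
  rw [hf, iterate_deriv_eval]
  exact iterate_derivative_f₂₃Poly_eval_one h₁ h₃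

/-- Properties of the [[23,1,7]] logical channel map: f₂₃(1) = 1, f₂₃ is odd,
f₂₃'(1) = f₂₃''(1) = f₂₃'''(1) = 0, and 1 − f₂₃(x) = O((1−x)⁴) near x = 1. -/
theorem stmt12 :
    f₂₃ 1 = 1 ∧
    (∀ x : ℝ, f₂₃ (-x) = -f₂₃ x) ∧
    deriv f₂₃ 1 = 0 ∧ deriv (deriv f₂₃) 1 = 0 ∧ deriv (deriv (deriv f₂₃)) 1 = 0 ∧
    (fun x : ℝ => 1 - f₂₃ x) =O[nhds 1] (fun x : ℝ => (1 - x) ^ 4) := by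
  refine ⟨f₂₃_one, f₂₃_neg, iterate_deriv_f₂₃_one (m := 1) le_rfl (by norm_num),
    iterate_deriv_f₂₃_one (m := 2) (by norm_num) (by norm_num),
    iterate_deriv_f₂₃_one (m := 3) (by norm_num) le_rfl, ?_⟩
  have hdvd : (X - C 1) ^ 4 ∣ 1 - f₂₃Poly :=
    X_sub_C_pow_dvd_of_iterate_derivative_isRoot fun _ => isRoot_iterate_derivative_one_sub_f₂₃Poly
  refine (isBigO_eval_of_X_sub_C_pow_dvd hdvd).congr (fun x => ?_) (fun x => ?_)
  · simp [eval_f₂₃Poly]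
  · ring
end
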